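/- Consider the MMAHH with acceptance operators OI and OW on f = OneMax, with p, q ∈ (0,1), and for k, h ∈ [0..n] let p_k^h = Pr[y_{T_s^{(1)}} ≤ h] when the chain is started from an arbitrary x_0 ∈ L_k and s_0 = OI. Then for all h, k ∈ [0..n] one has p_k^h ≥ p_n^0; moreover, for fixed h the quantity p_k^h is non-increasing in k ∈ [0..n], and for fixed k it is non-decreasing in h ∈ [0..n]. -/

import Mathlib

/-!
Before the first switch the MMAHH performs pure OI steps, and after each step it leaves OI
with probability `p`, independently of the search point. Hence
`p_k^h = ∑ₜ p (1 - p)ᵗ (M^{t+1} 1_{≤h})(x₀)`, where `M` is the expectation operator of one OI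
step on OneMax and `1_{≤h}` indicates at most `h` zero-bits; the event that OI is never left
is null because it has probability at most `(1 - p)ᵗ` for every `t`.

Both monotonicity claims therefore reduce to `M` preserving functions that are non-decreasing
in the number of one-bits. To compare `M g x` with `M g y` when `x` has at most as many one-bits
as `y`, pair the flip positions of `x` and `y` by the identity if `x` is strictly worse (one OI
step gains at most one bit), and by a permutation carrying the one-bits of `x` onto those of `y`
if they are equally good.
-/

open MeasureTheory
open scoped ENNReal NNReal

namespace MMAHHStmt

/-- The two acceptance operators. -/
inductive Op : Type
  | OI : Op
  | OW : Op
  deriving DecidableEq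

instance : MeasurableSpace Op := ⊤

/-- Search points: bit-strings of length `n`. -/
abbrev Point (n : ℕ) := Fin n → Bool

/-- The number of one-bits of a bit-string. -/
def ones {n : ℕ} (x : Point n) : ℕ := (Finset.univ.filter fun i => x i = true).card

/-- The all-ones string, the global optimum of all benchmarks considered. -/
def optimum (n : ℕ) : Point n := fun _ => true

/-- Flipping the bit in position `v`. -/
def flipBit {n : ℕ} (x : Point n) (v : Fin n) : Point n := Function.update x v (!(x v))

open Classical in
/-- The search point obtained from `x` by proposing to flip bit `v` and applying the
acceptance operator `op` for the objective function `f`. -/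
noncomputable def movedPoint {n : ℕ} (f : Point n → ℝ) (op : Op) (x : Point n) (v : Fin n) :
    Point n :=
  match op with
  | Op.OI => if f x < f (flipBit x v) then flipBit x v else x
  | Op.OW => if f (flipBit x v) < f x then flipBit x v else x

open Classical in
/-- One-step transition probability of the search point under acceptance operator `op`:
a uniformly random bit is flipped and the move is accepted or rejected according to `op`. -/
noncomputable def moveProb {n : ℕ} (f : Point n → ℝ) (op : Op) (x x' : Point n) : ℝ≥0∞ :=
  ((Finset.univ.filter fun v => movedPoint f op x v = x').card : ℝ≥0∞) / n

/-- Transition probabilities of the two-state Markov chain on the acceptance operators. -/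
noncomputable def switchProb (p q : ℝ) : Op → Op → ℝ≥0∞
  | Op.OI, Op.OI => ENNReal.ofReal (1 - p)
  | Op.OI, Op.OW => ENNReal.ofReal p
  | Op.OW, Op.OI => ENNReal.ofReal q
  | Op.OW, Op.OW => ENNReal.ofReal (1 - q)

/-- One-step transition probabilities of the MMAHH on the state space
`Point n × Op`: the search point moves according to the current acceptance operator, and,
independently, the operator switches according to the two-state Markov chain. -/
noncomputable def mmahhTrans {n : ℕ} (f : Point n → ℝ) (p q : ℝ) :
    Point n × Op → Point n × Op → ℝ≥0∞ :=
  fun s s' => moveProb f s.2 s.1 s'.1 * switchProb p q s.2 s'.2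

/-- `X` is (a version of) the MMAHH Markov chain with objective function `f` and switching
probabilities `p` and `q`, under the measure `μ`: each `X t` is measurable, and conditionally
on any history, the next state is distributed according to `mmahhTrans`. -/
def IsMMAHH {n : ℕ} {Ω : Type*} [MeasurableSpace Ω] (μ : Measure Ω)
    (X : ℕ → Ω → Point n × Op) (f : Point n → ℝ) (p q : ℝ) : Prop :=
  (∀ t, Measurable (X t)) ∧
  ∀ (t : ℕ) (σ : ℕ → Point n × Op) (s' : Point n × Op),
    μ {ω | (∀ i ≤ t, X i ω = σ i) ∧ X (t + 1) ω = s'}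
      = μ {ω | ∀ i ≤ t, X i ω = σ i} * mmahhTrans f p q (σ t) s'

/-- The runtime: the first hitting time of the global optimum, as an extended natural number
(`⊤` if the optimum is never reached). -/
noncomputable def hitTime {n : ℕ} {Ω : Type*} (X : ℕ → Ω → Point n × Op) (ω : Ω) : ℕ∞ :=
  ⨅ t ∈ {t : ℕ | (X t ω).1 = optimum n}, (t : ℕ∞)

/-- The `k`-th switching time between the two acceptance operators (with junk value given by
`Nat.sInf ∅ = 0` on the probability-zero event that no further switch occurs). -/
noncomputable def switchTime {n : ℕ} {Ω : Type*} (X : ℕ → Ω → Point n × Op) : ℕ → Ω → ℕ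
  | 0, _ => 0
  | k + 1, ω =>
      sInf {t : ℕ | switchTime X k ω ≤ t ∧ (X t ω).2 ≠ (X (switchTime X k ω) ω).2}

/-- The OneMax benchmark. -/
noncomputable def OneMax (n : ℕ) (x : Point n) : ℝ := (ones x : ℝ)

instance : Fintype Op := ⟨{Op.OI, Op.OW}, fun x => by cases x <;> simp⟩

section Bits

variable {n : ℕ}

lemma ones_le (x : Point n) : ones x ≤ n :=
  (Finset.card_filter_le _ _).trans_eq (Finset.card_fin n)

lemma ones_flipBit_of_false {x : Point n} {v : Fin n} (hv : x v = false) :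
    ones (flipBit x v) = ones x + 1 := by
  have : (Finset.univ.filter fun i => flipBit x v i = true)
      = insert v (Finset.univ.filter fun i => x i = true) := by
    ext i
    by_cases hiv : i = v <;> simp [flipBit, Function.update_apply, hiv, hv]
  rw [ones, ones, this, Finset.card_insert_of_notMem (by simp [hv])]

lemma ones_flipBit_of_true {x : Point n} {v : Fin n} (hv : x v = true) :
    ones (flipBit x v) + 1 = ones x := by
  have : (Finset.univ.filter fun i => flipBit x v i = true)
      = (Finset.univ.filter fun i => x i = true).erase v := by
    ext i
    by_cases hiv : i = v <;> simp [flipBit, Function.update_apply, hiv, hv]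
  rw [ones, ones, this, Finset.card_erase_add_one (by simp [hv])]

lemma ones_movedPoint_oneMax_OI (x : Point n) (v : Fin n) :
    ones (movedPoint (OneMax n) Op.OI x v) = ones x + (!x v).toNat := by
  cases hv : x v
  · have hlt : OneMax n x < OneMax n (flipBit x v) := by
      simp [OneMax, ones_flipBit_of_false hv]
    simp [movedPoint, hlt, ones_flipBit_of_false hv]
  · have hle : ¬OneMax n x < OneMax n (flipBit x v) := by
      simp only [OneMax, not_lt, Nat.cast_le, ← ones_flipBit_of_true hv]
      omega
    simp [movedPoint, hle]

lemma exists_perm_comp_eq_of_ones_eq {x y : Point n} (h : ones x = ones y) :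
    ∃ π : Equiv.Perm (Fin n), ∀ i, y (π i) = x i := by
  let e : {i // x i = true} ≃ {i // y i = true} :=
    Fintype.equivOfCardEq (by rw [Fintype.card_subtype, Fintype.card_subtype]; exact h)
  refine ⟨e.extendSubtype, fun i => ?_⟩
  cases hi : x i
  · simpa using e.extendSubtype_not_mem i (by simp [hi])
  · exact e.extendSubtype_mem i hi

end Bits

section Expectation

variable {n : ℕ}

noncomputable def moveExpect (f : Point n → ℝ) (op : Op) (g : Point n → ℝ≥0∞) (x : Point n) :
    ℝ≥0∞ :=
  ∑ x', moveProb f op x x' * g x'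

lemma moveExpect_eq (f : Point n → ℝ) (op : Op) (g : Point n → ℝ≥0∞) (x : Point n) :
    moveExpect f op g x = (∑ v, g (movedPoint f op x v)) / n := by
  classical
  simp only [moveExpect, moveProb, div_eq_mul_inv, mul_right_comm _ (n : ℝ≥0∞)⁻¹, ← Finset.sum_mul]
  congr 1
  simp only [Finset.card_filter, Nat.cast_sum, Finset.sum_mul, Nat.cast_ite, ite_mul]
  rw [Finset.sum_comm]
  simp

lemma moveExpect_mono (f : Point n → ℝ) (op : Op) : Monotone (moveExpect f op) :=
  fun _ _ hg _ => Finset.sum_le_sum fun x' _ => mul_le_mul_right (hg x') _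

lemma iterate_moveExpect_one_le (f : Point n → ℝ) (op : Op) (t : ℕ) (x : Point n) :
    (moveExpect f op)^[t] 1 x ≤ 1 := by
  induction t generalizing x with
  | zero => rfl
  | succ t ih =>
    rw [Function.iterate_succ_apply', moveExpect_eq]
    calc (∑ v, (moveExpect f op)^[t] 1 (movedPoint f op x v)) / n
        ≤ (∑ _v : Fin n, (1 : ℝ≥0∞)) / n := by gcongr; exact ih _
      _ ≤ 1 := by simp [ENNReal.div_self_le_one]

def MonotoneInOnes (g : Point n → ℝ≥0∞) : Prop :=
  ∀ ⦃x y⦄, ones x ≤ ones y → g x ≤ g y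

lemma MonotoneInOnes.moveExpect_oneMax_OI {g : Point n → ℝ≥0∞} (hg : MonotoneInOnes g) :
    MonotoneInOnes (moveExpect (OneMax n) Op.OI g) := by
  intro x y hxy
  rw [moveExpect_eq, moveExpect_eq]
  gcongr ?_ / _
  rcases hxy.lt_or_eq with hlt | heq
  · refine Finset.sum_le_sum fun v _ => hg ?_
    rw [ones_movedPoint_oneMax_OI, ones_movedPoint_oneMax_OI]
    have := Bool.toNat_le (!x v)
    omega
  · obtain ⟨π, hπ⟩ := exists_perm_comp_eq_of_ones_eq heq
    rw [← Equiv.sum_comp π (fun v => g (movedPoint (OneMax n) Op.OI y v))]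
    refine Finset.sum_le_sum fun v _ => hg ?_
    rw [ones_movedPoint_oneMax_OI, ones_movedPoint_oneMax_OI, hπ, heq]

lemma MonotoneInOnes.iterate_moveExpect_oneMax_OI {g : Point n → ℝ≥0∞} (hg : MonotoneInOnes g)
    (t : ℕ) : MonotoneInOnes ((moveExpect (OneMax n) Op.OI)^[t] g) := by
  induction t with
  | zero => exact hg
  | succ t ih =>
    rw [Function.iterate_succ_apply']
    exact ih.moveExpect_oneMax_OI

lemma monotoneInOnes_indicator_sub_ones_le (h : ℕ) :
    MonotoneInOnes ({x : Point n | n - ones x ≤ h}.indicator 1) := by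
  intro x y hxy
  simp only [Set.indicator_apply, Set.mem_ofPred_eq, Pi.one_apply]
  split_ifs <;> first | rfl | exact zero_le | omega

lemma iterate_moveExpect_oneMax_OI_indicator_le {h h' : ℕ} (hh : h' ≤ h) {x y : Point n}
    (hxy : ones x ≤ ones y) (t : ℕ) :
    (moveExpect (OneMax n) Op.OI)^[t] ({z | n - ones z ≤ h'}.indicator 1) x
      ≤ (moveExpect (OneMax n) Op.OI)^[t] ({z | n - ones z ≤ h}.indicator 1) y := by
  have hH : {z : Point n | n - ones z ≤ h'}.indicator (1 : Point n → ℝ≥0∞)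
      ≤ {z | n - ones z ≤ h}.indicator 1 :=
    Set.indicator_le_indicator_of_subset (fun z (hz : n - ones z ≤ h') => hz.trans hh)
      fun _ => zero_le
  calc _ ≤ (moveExpect (OneMax n) Op.OI)^[t] ({z | n - ones z ≤ h}.indicator 1) x :=
        (moveExpect_mono _ _).iterate t hH x
    _ ≤ _ := (monotoneInOnes_indicator_sub_ones_le h).iterate_moveExpect_oneMax_OI t hxy

end Expectation

lemma Op.ne_OI_iff {op : Op} : op ≠ Op.OI ↔ op = Op.OW := by
  cases op <;> simp

section Events

variable {n : ℕ} {Ω : Type*} {X : ℕ → Ω → Point n × Op}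

def path (X : ℕ → Ω → Point n × Op) (t : ℕ) (ω : Ω) : Fin (t + 1) → Point n × Op :=
  fun i => X i ω

def oiUntil (X : ℕ → Ω → Point n × Op) (t : ℕ) : Set Ω :=
  {ω | ∀ i ≤ t, (X i ω).2 = Op.OI}

lemma switchTime_one_eq_succ {ω : Ω} {t : ℕ} (hOI : ω ∈ oiUntil X t)
    (hsw : (X (t + 1) ω).2 ≠ Op.OI) : switchTime X 1 ω = t + 1 := by
  have h0 : (X 0 ω).2 = Op.OI := hOI 0 (Nat.zero_le t)
  simp only [switchTime, zero_le, true_and, h0]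
  refine le_antisymm (Nat.sInf_le hsw) (le_csInf ⟨t + 1, hsw⟩ fun s hs => ?_)
  by_contra! hst
  exact hs (hOI s (by omega))

def oiPhaseEndsIn (X : ℕ → Ω → Point n × Op) (H : Set (Point n)) (t : ℕ) : Set Ω :=
  oiUntil X t ∩ {ω | (X (t + 1) ω).2 = Op.OW} ∩ {ω | (X (t + 1) ω).1 ∈ H}

lemma oiPhaseEndsIn_subset (H : Set (Point n)) (t : ℕ) :
    oiPhaseEndsIn X H t ⊆ {ω | (X (switchTime X 1 ω) ω).1 ∈ H} := by
  rintro ω ⟨⟨hOI, hOW⟩, hH⟩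
  rw [Set.mem_ofPred_eq, switchTime_one_eq_succ hOI (Op.ne_OI_iff.2 hOW)]
  exact hH

lemma setOf_switchTime_one_mem_subset (H : Set (Point n)) :
    {ω | (X (switchTime X 1 ω) ω).1 ∈ H} ⊆
      (⋃ t, oiPhaseEndsIn X H t) ∪ ({ω | (X 0 ω).2 ≠ Op.OI} ∪ ⋂ t, oiUntil X t) := by
  classical
  intro ω hω
  by_cases h0 : (X 0 ω).2 = Op.OI
  · by_cases hswitch : ∃ s, (X s ω).2 ≠ Op.OI
    · have hspec := Nat.find_spec hswitch
      obtain ⟨t, ht⟩ := Nat.exists_eq_succ_of_ne_zero (n := Nat.find hswitch)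
        fun h => hspec (by rw [h]; exact h0)
      have hOI : ω ∈ oiUntil X t := fun i hi => not_not.1 (Nat.find_min hswitch (by omega))
      have hsw : (X (t + 1) ω).2 ≠ Op.OI := by rw [← Nat.succ_eq_add_one, ← ht]; exact hspec
      rw [Set.mem_ofPred_eq, switchTime_one_eq_succ hOI hsw] at hω
      exact Or.inl (Set.mem_iUnion.2 ⟨t, ⟨hOI, Op.ne_OI_iff.1 hsw⟩, hω⟩)
    · simp only [not_exists, not_not] at hswitch
      exact Or.inr (Or.inr (Set.mem_iInter.2 fun t i _ => hswitch i))
  · exact Or.inr (Or.inl h0)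

lemma pairwise_disjoint_oiPhaseEndsIn (H : Set (Point n)) :
    Pairwise (Function.onFun Disjoint (oiPhaseEndsIn X H)) := by
  refine (pairwise_disjoint_on _).2 fun a b hab => Set.disjoint_left.2 ?_
  rintro ω ⟨⟨-, hOW⟩, -⟩ ⟨⟨hOI, -⟩, -⟩
  have h := hOI (a + 1) hab
  rw [Set.mem_ofPred_eq.mp hOW] at h
  cases h

end Events

section MarkovProperty

variable {n : ℕ} {Ω : Type*} [MeasurableSpace Ω] {μ : Measure Ω} {X : ℕ → Ω → Point n × Op}
  {f : Point n → ℝ} {p q : ℝ}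

lemma measure_inter_preimage_finset {β : Type*} [MeasurableSpace β] [MeasurableSingletonClass β]
    {Y : Ω → β} (hY : Measurable Y) (S : Set Ω) (A : Finset β) :
    μ (S ∩ Y ⁻¹' A) = ∑ b ∈ A, μ (S ∩ Y ⁻¹' {b}) := by
  rw [← Set.inter_comm, ← Measure.restrict_apply (hY A.measurableSet),
    ← sum_measure_preimage_singleton A fun b _ => hY (measurableSet_singleton b)]
  simp only [Measure.restrict_apply (hY (measurableSet_singleton _)), Set.inter_comm]

lemma measure_eq_sum_inter_preimage_singleton {β : Type*} [Fintype β] [MeasurableSpace β]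
    [MeasurableSingletonClass β] {Y : Ω → β} (hY : Measurable Y) (S : Set Ω) :
    μ S = ∑ b, μ (S ∩ Y ⁻¹' {b}) := by
  rw [← measure_inter_preimage_finset hY, Finset.coe_univ, Set.preimage_univ, Set.inter_univ]

lemma measure_initial_ne_null [IsProbabilityMeasure μ] (hX0 : Measurable (X 0)) {s : Point n × Op}
    (hinit : μ {ω | X 0 ω = s} = 1) : μ {ω | X 0 ω ≠ s} = 0 :=
  (prob_compl_eq_zero_iff (hX0 (.of_discrete (s := {s})))).2 hinit

lemma IsMMAHH.measure_path_eq_inter_next (hchain : IsMMAHH μ X f p q) (t : ℕ)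
    (ρ : Fin (t + 1) → Point n × Op) (s' : Point n × Op) :
    μ ({ω | path X t ω = ρ} ∩ {ω | X (t + 1) ω = s'})
      = μ {ω | path X t ω = ρ} * mmahhTrans f p q (ρ (Fin.last t)) s' := by
  let σ : ℕ → Point n × Op := fun i => ρ ⟨min i t, by omega⟩
  have hpath : {ω | path X t ω = ρ} = {ω | ∀ i ≤ t, X i ω = σ i} := by
    ext ω
    simp only [Set.mem_ofPred_eq, funext_iff, path, Fin.forall_iff, Nat.lt_succ_iff, σ]
    refine forall₂_congr fun i hi => ?_
    rw [Fin.mk.inj_iff.mpr (min_eq_left hi).symm]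
  have hlast : σ t = ρ (Fin.last t) := by simp [σ, Fin.last]
  rw [hpath, ← hlast]
  exact hchain.2 t σ s'

lemma measurable_path (hX : ∀ t, Measurable (X t)) (t : ℕ) : Measurable (path X t) :=
  measurable_pi_lambda _ fun i => hX i

lemma IsMMAHH.measure_path_mem_inter_next (hchain : IsMMAHH μ X f p q) (t : ℕ)
    (S : Finset (Fin (t + 1) → Point n × Op)) (s s' : Point n × Op)
    (hS : ∀ ρ ∈ S, ρ (Fin.last t) = s) :
    μ (path X t ⁻¹' S ∩ {ω | X (t + 1) ω = s'})
      = μ (path X t ⁻¹' S) * mmahhTrans f p q s s' := by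
  have hpath := measurable_path hchain.1 t
  rw [Set.inter_comm, measure_inter_preimage_finset hpath, ← Set.univ_inter (path X t ⁻¹' S),
    measure_inter_preimage_finset hpath, Finset.sum_mul]
  refine Finset.sum_congr rfl fun ρ hρ => ?_
  rw [Set.univ_inter, Set.inter_comm, ← hS ρ hρ]
  exact hchain.measure_path_eq_inter_next t ρ s'

end MarkovProperty

section OIPhase

variable {n : ℕ} {Ω : Type*} [MeasurableSpace Ω] {μ : Measure Ω} {X : ℕ → Ω → Point n × Op}
  {f : Point n → ℝ} {p q : ℝ}

noncomputable def oiMass (μ : Measure Ω) (X : ℕ → Ω → Point n × Op) (t : ℕ) (x : Point n) :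
    ℝ≥0∞ :=
  μ (oiUntil X t ∩ {ω | (X t ω).1 = x})

lemma IsMMAHH.measure_oiUntil_inter_next (hchain : IsMMAHH μ X f p q) (t : ℕ)
    (s' : Point n × Op) :
    μ (oiUntil X t ∩ {ω | X (t + 1) ω = s'})
      = ∑ x, oiMass μ X t x * mmahhTrans f p q (x, Op.OI) s' := by
  classical
  rw [measure_eq_sum_inter_preimage_singleton (hchain.1 t).fst]
  refine Finset.sum_congr rfl fun x _ => ?_
  let S := Finset.univ.filter fun ρ : Fin (t + 1) → Point n × Op =>
    (∀ i, (ρ i).2 = Op.OI) ∧ (ρ (Fin.last t)).1 = x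
  have hS : oiUntil X t ∩ {ω | (X t ω).1 = x} = path X t ⁻¹' S := by
    ext ω
    simp [S, path, oiUntil, Fin.forall_iff, Fin.last]
  have hlast : ∀ ρ ∈ S, ρ (Fin.last t) = (x, Op.OI) := by
    intro ρ hρ
    simp only [S, Finset.mem_filter, Finset.mem_univ, true_and] at hρ
    exact Prod.ext hρ.2 (hρ.1 _)
  rw [oiMass, hS, ← hchain.measure_path_mem_inter_next t S _ s' hlast, ← hS]
  congr 1
  ext ω
  simp only [Set.mem_inter_iff, Set.mem_preimage, Set.mem_ofPred_eq]
  tauto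

lemma IsMMAHH.oiMass_succ (hchain : IsMMAHH μ X f p q) (t : ℕ) (x' : Point n) :
    oiMass μ X (t + 1) x'
      = ∑ x, oiMass μ X t x * (moveProb f Op.OI x x' * ENNReal.ofReal (1 - p)) := by
  have hev : oiUntil X (t + 1) ∩ {ω | (X (t + 1) ω).1 = x'}
      = oiUntil X t ∩ {ω | X (t + 1) ω = (x', Op.OI)} := by
    ext ω
    simp only [oiUntil, Set.mem_inter_iff, Set.mem_ofPred_eq, Prod.ext_iff, Nat.le_succ_iff]
    grind
  rw [oiMass, hev, hchain.measure_oiUntil_inter_next]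
  rfl

lemma oiMass_zero [IsProbabilityMeasure μ] (hX : ∀ t, Measurable (X t)) {x0 : Point n}
    (hinit : μ {ω | X 0 ω = (x0, Op.OI)} = 1) (x : Point n) :
    oiMass μ X 0 x = if x = x0 then 1 else 0 := by
  have hev : oiUntil X 0 ∩ {ω | (X 0 ω).1 = x} = {ω | X 0 ω = (x, Op.OI)} := by
    ext ω
    simp [oiUntil, Prod.ext_iff, and_comm]
  rw [oiMass, hev]
  split_ifs with hx
  · rw [hx, hinit]
  · refine measure_mono_null ?_ (measure_initial_ne_null (hX 0) hinit)
    exact fun ω hω hω0 => hx (congrArg Prod.fst (hω.symm.trans hω0))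

lemma IsMMAHH.sum_oiMass_mul [IsProbabilityMeasure μ] (hchain : IsMMAHH μ X f p q)
    {x0 : Point n} (hinit : μ {ω | X 0 ω = (x0, Op.OI)} = 1) (t : ℕ) (g : Point n → ℝ≥0∞) :
    ∑ x, oiMass μ X t x * g x
      = ENNReal.ofReal (1 - p) ^ t * (moveExpect f Op.OI)^[t] g x0 := by
  induction t generalizing g with
  | zero => simp [oiMass_zero hchain.1 hinit]
  | succ t ih =>
    calc ∑ x', oiMass μ X (t + 1) x' * g x'
        = ∑ x, oiMass μ X t x * (ENNReal.ofReal (1 - p) * moveExpect f Op.OI g x) := by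
          simp only [hchain.oiMass_succ, Finset.sum_mul, moveExpect, Finset.mul_sum]
          rw [Finset.sum_comm]
          refine Finset.sum_congr rfl fun x _ => Finset.sum_congr rfl fun x' _ => by ring
      _ = ENNReal.ofReal (1 - p) ^ (t + 1) * (moveExpect f Op.OI)^[t + 1] g x0 := by
          simp only [mul_left_comm _ (ENNReal.ofReal (1 - p)), ← Finset.mul_sum, ih,
            Function.iterate_succ_apply, pow_succ]
          ring

lemma IsMMAHH.measure_oiUntil_le [IsProbabilityMeasure μ] (hchain : IsMMAHH μ X f p q)
    {x0 : Point n} (hinit : μ {ω | X 0 ω = (x0, Op.OI)} = 1) (t : ℕ) :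
    μ (oiUntil X t) ≤ ENNReal.ofReal (1 - p) ^ t := by
  calc μ (oiUntil X t) = ∑ x, oiMass μ X t x * (1 : Point n → ℝ≥0∞) x := by
        rw [measure_eq_sum_inter_preimage_singleton (hchain.1 t).fst]
        simp only [Pi.one_apply, mul_one]
        rfl
    _ = ENNReal.ofReal (1 - p) ^ t * (moveExpect f Op.OI)^[t] 1 x0 :=
        hchain.sum_oiMass_mul hinit t 1
    _ ≤ ENNReal.ofReal (1 - p) ^ t :=
        mul_le_of_le_one_right' (iterate_moveExpect_one_le f Op.OI t x0)

lemma IsMMAHH.measure_iInter_oiUntil [IsProbabilityMeasure μ] (hp : 0 < p)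
    (hchain : IsMMAHH μ X f p q) {x0 : Point n} (hinit : μ {ω | X 0 ω = (x0, Op.OI)} = 1) :
    μ (⋂ t, oiUntil X t) = 0 := by
  have hlim := ENNReal.tendsto_pow_atTop_nhds_zero_of_lt_one
    (ENNReal.ofReal_lt_one.2 (by linarith : 1 - p < 1))
  refine le_antisymm (ge_of_tendsto' hlim fun t => ?_) zero_le
  exact (measure_mono (Set.iInter_subset _ t)).trans (hchain.measure_oiUntil_le hinit t)

lemma measurableSet_oiUntil (hX : ∀ t, Measurable (X t)) (t : ℕ) :
    MeasurableSet (oiUntil X t) := by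
  have hev : oiUntil X t = path X t ⁻¹' {ρ | ∀ i, (ρ i).2 = Op.OI} := by
    ext ω
    simp [oiUntil, path, Fin.forall_iff]
  rw [hev]
  exact measurable_path hX t .of_discrete

lemma measurableSet_oiPhaseEndsIn (hX : ∀ t, Measurable (X t)) (H : Set (Point n)) (t : ℕ) :
    MeasurableSet (oiPhaseEndsIn X H t) :=
  ((measurableSet_oiUntil hX t).inter
    (hX (t + 1) (.of_discrete (s := {s : Point n × Op | s.2 = Op.OW})))).inter
    (hX (t + 1) (.of_discrete (s := {s : Point n × Op | s.1 ∈ H})))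

lemma IsMMAHH.measure_oiPhaseEndsIn [IsProbabilityMeasure μ] (hchain : IsMMAHH μ X f p q)
    {x0 : Point n} (hinit : μ {ω | X 0 ω = (x0, Op.OI)} = 1) (H : Set (Point n)) (t : ℕ) :
    μ (oiPhaseEndsIn X H t) = ENNReal.ofReal p * ENNReal.ofReal (1 - p) ^ t *
      (moveExpect f Op.OI)^[t + 1] (H.indicator 1) x0 := by
  classical
  have hsplit : μ (oiPhaseEndsIn X H t)
      = ∑ x' ∈ H.toFinset, μ (oiUntil X t ∩ {ω | X (t + 1) ω = (x', Op.OW)}) := by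
    have hev : oiPhaseEndsIn X H t = oiUntil X t ∩ {ω | (X (t + 1) ω).2 = Op.OW} ∩
        (fun ω => (X (t + 1) ω).1) ⁻¹' H.toFinset := by
      ext ω
      simp [oiPhaseEndsIn]
    rw [hev, measure_inter_preimage_finset (hchain.1 (t + 1)).fst]
    refine Finset.sum_congr rfl fun x' _ => congrArg μ ?_
    ext ω
    simp only [Set.mem_inter_iff, Set.mem_ofPred_eq, Set.mem_preimage, Set.mem_singleton_iff,
      Prod.ext_iff]
    tauto
  calc μ (oiPhaseEndsIn X H t)
      = ∑ x' ∈ H.toFinset, ∑ x, oiMass μ X t x * (moveProb f Op.OI x x' * ENNReal.ofReal p) := by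
        rw [hsplit]
        simp only [hchain.measure_oiUntil_inter_next]
        rfl
    _ = ∑ x, oiMass μ X t x * (ENNReal.ofReal p * moveExpect f Op.OI (H.indicator 1) x) := by
        rw [Finset.sum_comm]
        refine Finset.sum_congr rfl fun x _ => ?_
        simp only [moveExpect, Set.indicator_apply, Pi.one_apply, mul_ite, mul_one, mul_zero,
          ← Finset.sum_filter, Set.filter_mem_univ_eq_toFinset, Finset.mul_sum]
        exact Finset.sum_congr rfl fun x' _ => by ring
    _ = ENNReal.ofReal p * ENNReal.ofReal (1 - p) ^ t *
          (moveExpect f Op.OI)^[t + 1] (H.indicator 1) x0 := by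
        simp only [mul_left_comm _ (ENNReal.ofReal p), ← Finset.mul_sum,
          hchain.sum_oiMass_mul hinit, Function.iterate_succ_apply]
        ring

theorem IsMMAHH.measure_switchTime_one_mem [IsProbabilityMeasure μ] (hp : 0 < p)
    (hchain : IsMMAHH μ X f p q) {x0 : Point n} (hinit : μ {ω | X 0 ω = (x0, Op.OI)} = 1)
    (H : Set (Point n)) :
    μ {ω | (X (switchTime X 1 ω) ω).1 ∈ H} = ∑' t, ENNReal.ofReal p * ENNReal.ofReal (1 - p) ^ t *
      (moveExpect f Op.OI)^[t + 1] (H.indicator 1) x0 := by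
  have hnull : μ ({ω | (X 0 ω).2 ≠ Op.OI} ∪ ⋂ t, oiUntil X t) = 0 := by
    refine measure_union_null ?_ (hchain.measure_iInter_oiUntil hp hinit)
    refine measure_mono_null ?_ (measure_initial_ne_null (hchain.1 0) hinit)
    exact fun ω (hω : (X 0 ω).2 ≠ Op.OI) hω0 => hω (by rw [hω0])
  calc μ {ω | (X (switchTime X 1 ω) ω).1 ∈ H}
      = μ (⋃ t, oiPhaseEndsIn X H t) := by
        refine le_antisymm ?_ (measure_mono (Set.iUnion_subset (oiPhaseEndsIn_subset H)))
        calc _ ≤ _ := measure_mono (setOf_switchTime_one_mem_subset H)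
          _ ≤ _ := measure_union_le _ _
          _ = _ := by rw [hnull, add_zero]
    _ = ∑' t, μ (oiPhaseEndsIn X H t) :=
        measure_iUnion (pairwise_disjoint_oiPhaseEndsIn H) (measurableSet_oiPhaseEndsIn hchain.1 H)
    _ = _ := tsum_congr (hchain.measure_oiPhaseEndsIn hinit H)

end OIPhase

theorem oi_phase_prob_monotone_general (n : ℕ) (p q : ℝ)
    (hp0 : 0 < p)
    (k h k' h' : ℕ)
    (hkk : k ≤ k') (hhh : h' ≤ h)
    (x0 x0' : Point n) (hx0 : n - ones x0 = k) (hx0' : n - ones x0' = k')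
    (Ω : Type) [MeasurableSpace Ω] (μ : Measure Ω) (X : ℕ → Ω → Point n × Op)
    (Ω' : Type) [MeasurableSpace Ω'] (μ' : Measure Ω') (X' : ℕ → Ω' → Point n × Op)
    (hprob : IsProbabilityMeasure μ) (hchain : IsMMAHH μ X (OneMax n) p q)
    (hinit : μ {ω | X 0 ω = (x0, Op.OI)} = 1)
    (hprob' : IsProbabilityMeasure μ') (hchain' : IsMMAHH μ' X' (OneMax n) p q)
    (hinit' : μ' {ω | X' 0 ω = (x0', Op.OI)} = 1) :
    μ' {ω | n - ones (X' (switchTime X' 1 ω) ω).1 ≤ h'} ≤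
      μ {ω | n - ones (X (switchTime X 1 ω) ω).1 ≤ h} := by
  have hones : ones x0' ≤ ones x0 := by
    have := ones_le x0
    have := ones_le x0'
    omega
  calc _ = _ := hchain'.measure_switchTime_one_mem hp0 hinit' {x | n - ones x ≤ h'}
    _ ≤ _ := ENNReal.tsum_le_tsum fun t =>
        mul_le_mul_right (iterate_moveExpect_oneMax_OI_indicator_le hhh hones (t + 1)) _
    _ = _ := (hchain.measure_switchTime_one_mem hp0 hinit {x | n - ones x ≤ h}).symm

/-- Monotonicity and minimality of the one-OI-phase success probabilities `p_k^h` on OneMax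
(Lemma 3 of the paper): if `k ≤ k'` and `h' ≤ h`, then `p_{k'}^{h'} ≤ p_k^h`; in particular
`p_k^h` is non-increasing in `k`, non-decreasing in `h`, and always at least `p_n^0`. -/
theorem oi_phase_prob_monotone (n : ℕ) (hn : 2 ≤ n) (p q : ℝ)
    (hp0 : 0 < p) (hp1 : p < 1) (hq0 : 0 < q) (hq1 : q < 1)
    (k h k' h' : ℕ) (hk : k ≤ n) (hh : h ≤ n) (hk' : k' ≤ n) (hh' : h' ≤ n)
    (hkk : k ≤ k') (hhh : h' ≤ h)
    (x0 x0' : Point n) (hx0 : n - ones x0 = k) (hx0' : n - ones x0' = k')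
    (Ω : Type) [MeasurableSpace Ω] (μ : Measure Ω) (X : ℕ → Ω → Point n × Op)
    (Ω' : Type) [MeasurableSpace Ω'] (μ' : Measure Ω') (X' : ℕ → Ω' → Point n × Op)
    (hprob : IsProbabilityMeasure μ) (hchain : IsMMAHH μ X (OneMax n) p q)
    (hinit : μ {ω | X 0 ω = (x0, Op.OI)} = 1)
    (hprob' : IsProbabilityMeasure μ') (hchain' : IsMMAHH μ' X' (OneMax n) p q)
    (hinit' : μ' {ω | X' 0 ω = (x0', Op.OI)} = 1) :
    μ' {ω | n - ones (X' (switchTime X' 1 ω) ω).1 ≤ h'} ≤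
      μ {ω | n - ones (X (switchTime X 1 ω) ω).1 ≤ h} :=
  oi_phase_prob_monotone_general n p q hp0 k h k' h' hkk hhh x0 x0' hx0 hx0' Ω μ X Ω' μ' X' hprob
    hchain hinit hprob' hchain' hinit'
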